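/- arXiv:1202.1219 — 5 statements merged into one kernel-verified Lean document; each statement's English description precedes it below -/
import Mathlib

section
/- For all nonnegative integers i and j with j ≤ i, the sum over k from 0 to j of (q^{i-k+1};q)_k · [j choose k]_q · q^{(i-k)(j-k)} equals 1, as an identity of polynomials (or formal power series) in q. -/
open Finset

/-- The variable `q`, as a rational function over `ℚ`. -/
noncomputable def q : RatFunc ℚ := RatFunc.X

/-- The q-shifted factorial `(a; q)_k = (1-a)(1-aq)⋯(1-aq^{k-1})`. -/
noncomputable def qPoch (a : RatFunc ℚ) (k : ℕ) : RatFunc ℚ :=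
  ∏ s ∈ Finset.range k, (1 - a * q ^ s)

/-- The Gaussian (q-binomial) coefficient `[j choose k]_q = (q;q)_j / ((q;q)_k (q;q)_{j-k})`. -/
noncomputable def qbinom (j k : ℕ) : RatFunc ℚ :=
  qPoch q j / (qPoch q k * qPoch q (j - k))

lemma q_pow_ne_one (n : ℕ) : q ^ (n+1) ≠ 1 := by
  unfold q
  intro h
  have h2 : (RatFunc.X : RatFunc ℚ) ^ (n+1) = algebraMap (Polynomial ℚ) _ (Polynomial.X ^ (n+1)) := by
    simp [RatFunc.algebraMap_X]
  rw [h2, show (1 : RatFunc ℚ) = algebraMap (Polynomial ℚ) _ 1 by simp] at h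
  have := RatFunc.algebraMap_injective (K := ℚ) h
  have := congrArg (Polynomial.eval 0) this
  simp at this

lemma one_sub_q_pow_ne_zero (n : ℕ) : (1 : RatFunc ℚ) - q ^ (n+1) ≠ 0 := by
  intro h
  exact q_pow_ne_one n (by linear_combination -h)

lemma qPoch_q_ne_zero (n : ℕ) : qPoch q n ≠ 0 := by
  unfold qPoch
  apply Finset.prod_ne_zero_iff.mpr
  intro s _
  have := one_sub_q_pow_ne_zero s
  rw [pow_succ'] at this
  simpa using this

lemma qPoch_zero (a : RatFunc ℚ) : qPoch a 0 = 1 := by simp [qPoch]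

lemma qPoch_succ (a : RatFunc ℚ) (k : ℕ) : qPoch a (k+1) = qPoch a k * (1 - a * q ^ k) :=
  Finset.prod_range_succ _ _

lemma qPoch_succ' (a : RatFunc ℚ) (k : ℕ) : qPoch a (k+1) = (1 - a) * qPoch (a * q) k := by
  rw [qPoch, Finset.prod_range_succ']
  rw [mul_comm]
  congr 1
  · simp
  · apply Finset.prod_congr rfl; intro s _; rw [pow_succ']; ring_nf

lemma qbinom_zero (n : ℕ) : qbinom n 0 = 1 := by
  simp [qbinom, qPoch_zero, div_self (qPoch_q_ne_zero n)]

lemma qbinom_self (n : ℕ) : qbinom n n = 1 := by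
  simp [qbinom, qPoch_zero, div_self (qPoch_q_ne_zero n)]

lemma qbinom_pascal (j k : ℕ) (h : k + 1 ≤ j) :
    qbinom (j+1) (k+1) = qbinom j (k+1) + q ^ (j-k) * qbinom j k := by
  obtain ⟨m, rfl⟩ : ∃ m, j = k + 1 + m := ⟨j - (k+1), by omega⟩
  unfold qbinom
  have e1 : k + 1 + m + 1 - (k + 1) = m + 1 := by omega
  have e2 : k + 1 + m - k = m + 1 := by omega
  have e3 : k + 1 + m - (k + 1) = m := by omega
  rw [e1, e2, e3, qPoch_succ q m, qPoch_succ q (k+1+m), qPoch_succ q k]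
  have h1 := qPoch_q_ne_zero (k+1+m)
  have h2 := qPoch_q_ne_zero k
  have h3 := qPoch_q_ne_zero m
  have h4 : (1 : RatFunc ℚ) - q * q ^ (k+1+m) ≠ 0 := by
    have := qPoch_q_ne_zero (k+1+m+1); rw [qPoch_succ] at this
    exact right_ne_zero_of_mul this
  have h5 : (1 : RatFunc ℚ) - q * q ^ k ≠ 0 := by
    have := qPoch_q_ne_zero (k+1); rw [qPoch_succ] at this
    exact right_ne_zero_of_mul this
  have h6 : (1 : RatFunc ℚ) - q * q ^ m ≠ 0 := by
    have := qPoch_q_ne_zero (m+1); rw [qPoch_succ] at this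
    exact right_ne_zero_of_mul this
  rw [show k + 1 + m = m + 1 + k by omega, pow_add, pow_add, pow_one]
  field_simp
  ring

lemma alladi_gordon_step (i j : ℕ) (h : j + 1 ≤ i) :
    ∑ k ∈ Finset.range (j+1+1), qPoch (q^(i-k+1)) k * qbinom (j+1) k * q^((i-k)*(j+1-k))
    = ∑ k ∈ Finset.range (j+1), qPoch (q^(i-k+1)) k * qbinom j k * q^((i-k)*(j-k)) := by
  set f : ℕ → RatFunc ℚ :=
    fun k => qPoch (q^(i-k+1)) k * qbinom (j+1) k * q^((i-k)*(j+1-k)) with hf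
  set g1 : ℕ → RatFunc ℚ :=
    fun k => qPoch (q^(i-k+1)) k * qbinom j k * q^((i-k)*(j+1-k)) with hg1
  set g2 : ℕ → RatFunc ℚ :=
    fun k => qPoch (q^(i-(k+1)+1)) (k+1) * (q^(j-k) * qbinom j k) * q^((i-(k+1))*(j+1-(k+1)))
    with hg2
  have h0 : f 0 = g1 0 := by simp only [hf, hg1, qbinom_zero]
  have hlast : f (j+1) = g2 j := by
    simp only [hf, hg2, qbinom_self, Nat.sub_self, pow_zero, one_mul, mul_one]
  have hsplit : ∀ k ∈ Finset.range j, f (k+1) = g1 (k+1) + g2 k := by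
    intro k hk
    rw [Finset.mem_range] at hk
    simp only [hf, hg1, hg2, qbinom_pascal j k (by omega)]
    ring
  have key : ∀ k ∈ Finset.range (j+1),
      g1 k + g2 k = qPoch (q^(i-k+1)) k * qbinom j k * q^((i-k)*(j-k)) := by
    intro k hk
    rw [Finset.mem_range] at hk
    have e1 : i - (k+1) + 1 = i - k := by omega
    have e3 : q ^ (i-k) * q = q ^ (i-k+1) := by rw [pow_succ]
    have e2 : j + 1 - (k+1) = j - k := by omega
    simp only [hg1, hg2, e1, e2, qPoch_succ', e3]
    have e4 : (i-k) * (j+1-k) = (i-k)*(j-k) + (i-k) := by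
      have : j+1-k = (j-k)+1 := by omega
      rw [this]; ring
    have e5 : (i-k)*(j-k) = (j-k) + (i-(k+1))*(j-k) := by
      have : i-k = (i-(k+1))+1 := by omega
      rw [this]; ring
    rw [e4, pow_add, e5, pow_add]
    ring
  calc ∑ k ∈ Finset.range (j+1+1), f k
      = ∑ k ∈ Finset.range (j+1), f (k+1) + f 0 := Finset.sum_range_succ' f (j+1)
    _ = (∑ k ∈ Finset.range j, f (k+1) + f (j+1)) + f 0 := by
        rw [Finset.sum_range_succ (fun k => f (k+1))]
    _ = (∑ k ∈ Finset.range j, (g1 (k+1) + g2 k) + g2 j) + g1 0 := by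
        rw [hlast, h0, Finset.sum_congr rfl hsplit]
    _ = (g1 0 + ∑ k ∈ Finset.range j, g1 (k+1)) + (∑ k ∈ Finset.range j, g2 k + g2 j) := by
        rw [Finset.sum_add_distrib]; ring
    _ = ∑ k ∈ Finset.range (j+1), g1 k + ∑ k ∈ Finset.range (j+1), g2 k := by
        rw [Finset.sum_range_succ' g1 j, Finset.sum_range_succ g2 j]; ring
    _ = ∑ k ∈ Finset.range (j+1), (g1 k + g2 k) := (Finset.sum_add_distrib).symm
    _ = _ := Finset.sum_congr rfl key

/-- The Alladi–Gordon key identity: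
`∑_{k=0}^{j} (q^{i-k+1};q)_k [j choose k]_q q^{(i-k)(j-k)} = 1` for `j ≤ i`. -/
theorem alladi_gordon_key_identity (i j : ℕ) (hji : j ≤ i) :
    ∑ k ∈ Finset.range (j + 1),
      qPoch (q ^ (i - k + 1)) k * qbinom j k * q ^ ((i - k) * (j - k)) = 1 := by
  induction j with
  | zero => simp [qPoch_zero, qbinom_zero]
  | succ j ih =>
    rw [alladi_gordon_step i j hji]
    exact ih (by omega)
end

section
/- There is a bijection between overpartitions with exactly n nonnegative parts and pairs (α, β), where α is a partition with distinct parts drawn from {0, 1, ..., n−1} (possibly empty) and β is a partition with exactly n nonnegative parts. Moreover, under this bijection, the number of parts of α equals the number of overlined parts of the overpartition, and |α| + |β| equals the size of the overpartition. -/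
open Finset

/-- An overpartition with exactly `n` nonnegative parts: a weakly decreasing sequence of
`n` nonnegative integers in which a part may be overlined only if it is the first
occurrence of its value. -/
structure Overpartition (n : ℕ) where
  part : Fin n → ℕ
  overlined : Fin n → Bool
  antitone : ∀ a b : Fin n, a ≤ b → part b ≤ part a
  firstOcc : ∀ a : Fin n, overlined a = true → ∀ b : Fin n, b < a → part b ≠ part a

/-!
Joichi–Stanton insertion, done all at once: inserting the parts `m ∈ α` into `β` adds to the
part at position `a` the number of `m ∈ α` with `a < m`, and overlines the positions in `α`.
Conversely, an overpartition is undone by reading `α` off its overlined positions and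
subtracting these counts. The parts of an overpartition strictly decrease along its overlined
positions, so between positions `a < b` there are at most `part a - part b` overlined ones;
this makes the subtraction exact and keeps the result weakly decreasing.
-/

variable {n : ℕ}

def numAbove (S : Finset (Fin n)) (a : Fin n) : ℕ := #{m ∈ S | a < m}

theorem numAbove_antitone (S : Finset (Fin n)) : Antitone (numAbove S) :=
  fun _ _ hab ↦ card_le_card <| monotone_filter_right S fun _ _ hm ↦ hab.trans_lt hm

theorem numAbove_lt_of_mem {S : Finset (Fin n)} {a b : Fin n} (ha : a ∈ S) (hba : b < a) :
    numAbove S a < numAbove S b :=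
  card_lt_card <| (ssubset_iff_of_subset <| monotone_filter_right S fun _ _ hm ↦ hba.trans hm).2
    ⟨a, mem_filter.2 ⟨ha, hba⟩, by simp⟩

theorem numAbove_le_add_card_Ioc (S : Finset (Fin n)) (a b : Fin n) :
    numAbove S a ≤ numAbove S b + #{m ∈ S | a < m ∧ m ≤ b} := by
  refine (card_le_card fun m hm ↦ ?_).trans (card_union_le _ _)
  simp only [mem_filter, mem_union] at hm ⊢
  by_cases hmb : b < m
  · exact Or.inl ⟨hm.1, hmb⟩
  · exact Or.inr ⟨hm.1, hm.2, not_lt.1 hmb⟩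

theorem sum_numAbove (S : Finset (Fin n)) : ∑ a, numAbove S a = ∑ m ∈ S, (m : ℕ) := by
  refine (sum_card_bipartiteAbove_eq_sum_card_bipartiteBelow (· < ·)).trans
    (sum_congr rfl fun m _ ↦ ?_)
  simp [bipartiteBelow, filter_gt_eq_Iio]

namespace Overpartition

attribute [ext] Overpartition

def overlinedSet (lam : Overpartition n) : Finset (Fin n) := univ.filter (lam.overlined · = true)

theorem part_lt_of_overlined (lam : Overpartition n) {a b : Fin n} (hb : lam.overlined b = true)
    (hab : a < b) : lam.part b < lam.part a :=
  (lam.antitone a b hab.le).lt_of_ne (lam.firstOcc b hb a hab).symm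

/-- Overlined positions after `a` whose parts are at least `L` carry distinct values in
`[L, part a)`. -/
theorem card_le_part_sub (lam : Overpartition n) (a : Fin n) (L : ℕ) {T : Finset (Fin n)}
    (hT : ∀ m ∈ T, lam.overlined m = true ∧ a < m ∧ L ≤ lam.part m) :
    #T ≤ lam.part a - L := by
  have hinj : Set.InjOn lam.part T := by
    intro m hm m' hm' h
    by_contra hne
    rcases lt_or_gt_of_ne hne with hlt | hlt
    · exact (lam.part_lt_of_overlined (hT m' hm').1 hlt).ne' h
    · exact (lam.part_lt_of_overlined (hT m hm).1 hlt).ne h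
  simpa using card_le_card_of_injOn lam.part (t := Ico L (lam.part a))
    (fun m hm ↦ mem_Ico.2 ⟨(hT m hm).2.2, lam.part_lt_of_overlined (hT m hm).1 (hT m hm).2.1⟩)
    hinj

theorem numAbove_le_part (lam : Overpartition n) (a : Fin n) :
    numAbove lam.overlinedSet a ≤ lam.part a :=
  lam.card_le_part_sub a 0 (T := {m ∈ lam.overlinedSet | a < m}) (by simp [overlinedSet])

theorem numAbove_le_add_part_sub (lam : Overpartition n) (a b : Fin n) :
    numAbove lam.overlinedSet a ≤ numAbove lam.overlinedSet b + (lam.part a - lam.part b) :=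
  (numAbove_le_add_card_Ioc _ a b).trans <| Nat.add_le_add_left
    (lam.card_le_part_sub a (lam.part b) fun m hm ↦ by
      simp only [overlinedSet, mem_filter, mem_univ, true_and] at hm
      exact ⟨hm.1, hm.2.1, lam.antitone m b hm.2.2⟩) _

def reduced (lam : Overpartition n) (a : Fin n) : ℕ := lam.part a - numAbove lam.overlinedSet a

theorem reduced_antitone (lam : Overpartition n) : Antitone lam.reduced := by
  intro a b hab
  have := lam.numAbove_le_add_part_sub a b
  have := lam.numAbove_le_part b
  have := lam.antitone a b hab
  unfold reduced
  omega

def ofPair (S : Finset (Fin n)) (β : Fin n → ℕ) (hβ : Antitone β) : Overpartition n where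
  part a := β a + numAbove S a
  overlined a := decide (a ∈ S)
  antitone _ _ hab := Nat.add_le_add (hβ hab) (numAbove_antitone S hab)
  firstOcc a ha b hba := by
    have := numAbove_lt_of_mem (of_decide_eq_true ha) hba
    have := hβ hba.le
    omega

def equivPair : Overpartition n ≃ Finset (Fin n) × {β : Fin n → ℕ // Antitone β} where
  toFun lam := (lam.overlinedSet, ⟨lam.reduced, lam.reduced_antitone⟩)
  invFun p := ofPair p.1 p.2.1 p.2.2
  left_inv lam := Overpartition.ext (funext fun a ↦ Nat.sub_add_cancel (lam.numAbove_le_part a))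
    (funext fun a ↦ by simp [overlinedSet, ofPair])
  right_inv p := by
    obtain ⟨S, β, hβ⟩ := p
    have hS : (ofPair S β hβ).overlinedSet = S := by ext; simp [overlinedSet, ofPair]
    refine Prod.ext hS (Subtype.ext (funext fun a ↦ ?_))
    change (ofPair S β hβ).part a - numAbove (ofPair S β hβ).overlinedSet a = β a
    rw [hS]
    exact Nat.add_sub_cancel ..

end Overpartition

open Overpartition in
/-- Joichi–Stanton: overpartitions with `n` nonnegative parts are in bijection with
pairs `(α, β)` where `α` is a partition with distinct parts from `{0, 1, …, n-1}`
(a `Finset (Fin n)`, possibly empty) and `β` is a partition with `n` nonnegative parts.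
Moreover the number of parts of `α` equals the number of overlined parts, and
`|α| + |β|` equals the size of the overpartition. -/
theorem joichi_stanton (n : ℕ) :
    ∃ e : Overpartition n ≃
        (Finset (Fin n)) × {β : Fin n → ℕ // ∀ a b : Fin n, a ≤ b → β b ≤ β a},
      ∀ lam : Overpartition n,
        (e lam).1.card = (Finset.univ.filter (fun a : Fin n => lam.overlined a = true)).card ∧
        (∑ x ∈ (e lam).1, (x : ℕ)) + (∑ a, (e lam).2.1 a) = ∑ a, lam.part a := by
  refine ⟨equivPair, fun lam ↦ ⟨rfl, ?_⟩⟩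
  calc ∑ m ∈ lam.overlinedSet, (m : ℕ) + ∑ a, lam.reduced a
      = ∑ a, (numAbove lam.overlinedSet a + lam.reduced a) := by
        rw [sum_add_distrib, sum_numAbove]
    _ = ∑ a, lam.part a := sum_congr rfl fun a _ ↦ Nat.add_sub_cancel' (lam.numAbove_le_part a)
end

section
/- Fix nonnegative integers i, j with j ≤ i, and let O(i,j) = ⨄_{k=0}^{j} O(i,j,k) as defined via overpartitions with parts at most j−1 satisfying the overline condition. Let O_1 = {λ ∈ O(i,j) : ol(λ) ≥ 1 and the largest overlined part λ_t equals j−ℓ(λ)+ol(λ)−1}, O_2 = {λ ∈ O(i,j) : ol(λ) ≥ 1 and λ_t < j−ℓ(λ)+ol(λ)−1}, and O_3 = {λ ∈ O(i,j) : ol(λ) = 0}. Then O(i,j) is the disjoint union of O_1, O_2, O_3; i.e., for every λ ∈ O(i,j) with ol(λ) ≥ 1, the largest overlined part satisfies λ_t ≤ j−ℓ(λ)+ol(λ)−1. -/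
open Finset
open scoped Classical

/-- The set `O(i,j,k)` of overpartitions with exactly `k` nonnegative parts, each part at
most `j-1` (encoded as a weakly decreasing function `Fin k → Fin j` together with an
overlining indicator `Fin k → Bool`, where only first occurrences may be overlined),
such that for each `1 ≤ s ≤ k-1`, if `j-s` occurs as a part then there are at least
`k-s` overlined parts strictly to its right. (It does not depend on `i`.) -/
noncomputable def AGset (j k : ℕ) : Finset ((Fin k → Fin j) × (Fin k → Bool)) :=
  Finset.univ.filter (fun p =>
    (∀ a b : Fin k, a ≤ b → (p.1 b : ℕ) ≤ (p.1 a : ℕ)) ∧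
    (∀ a : Fin k, p.2 a = true → ∀ b : Fin k, b < a → p.1 b ≠ p.1 a) ∧
    (∀ s ∈ Finset.Icc 1 (k - 1), ∀ a : Fin k, (p.1 a : ℕ) = j - s →
      k - s ≤ (Finset.univ.filter (fun b : Fin k => a < b ∧ p.2 b = true)).card))

/-- The number of overlined parts of an overpartition. -/
def ol {j k : ℕ} (p : (Fin k → Fin j) × (Fin k → Bool)) : ℕ :=
  (Finset.univ.filter (fun a : Fin k => p.2 a = true)).card

/-- The size (sum of parts) of an overpartition. -/
def psize {j k : ℕ} (p : (Fin k → Fin j) × (Fin k → Bool)) : ℕ :=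
  ∑ a, (p.1 a : ℕ)

/-!
Let `m = λ_a` be an overlined part with `m + k ≥ j + ol λ`. Then `m = j - s` with
`1 ≤ s ≤ k - 1`, so the overline condition puts at least `k - s` overlined parts strictly to the
right of `a`; counting `λ_a` itself gives `k - s + 1 = m + k - j + 1 > ol λ` overlined parts.
-/

lemma card_overlined_gt_add_one_le_ol {j k : ℕ} (p : (Fin k → Fin j) × (Fin k → Bool))
    {a : Fin k} (ha : p.2 a = true) :
    (univ.filter (fun b : Fin k => a < b ∧ p.2 b = true)).card + 1 ≤ ol p := by
  have ha_notMem : a ∉ univ.filter (fun b : Fin k => a < b ∧ p.2 b = true) := by simp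
  rw [← card_insert_of_notMem ha_notMem]
  refine card_le_card fun b hb => ?_
  rcases mem_insert.mp hb with rfl | hb
  · simpa using ha
  · simpa using (mem_filter.mp hb).2.2

lemma AGset.overlined_part_add_length_lt {j k : ℕ} {p : (Fin k → Fin j) × (Fin k → Bool)}
    (hp : p ∈ AGset j k) {a : Fin k} (ha : p.2 a = true) :
    (p.1 a : ℕ) + k < j + ol p := by
  simp only [AGset, mem_filter] at hp
  have hm : (p.1 a : ℕ) < j := (p.1 a).2
  have hright := card_overlined_gt_add_one_le_ol p ha
  by_cases hs : j - p.1 a ≤ k - 1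
  · have hcond := hp.2.2.2 (j - p.1 a) (mem_Icc.mpr ⟨by omega, hs⟩) a (by omega)
    omega
  · omega

theorem AG_decomposition_general (j k : ℕ)
    (p : (Fin k → Fin j) × (Fin k → Bool)) (hp : p ∈ AGset j k) :
    ∀ a : Fin k, p.2 a = true → (p.1 a : ℕ) ≤ j - k + ol p - 1 := by
  intro a ha
  have := AGset.overlined_part_add_length_lt hp ha
  omega

/-- Decomposition lemma: every `λ ∈ O(i,j,k)` (with `k ≤ j ≤ i`) having at least one
overlined part has its largest overlined part at most `j - ℓ(λ) + ol(λ) - 1`; i.e. every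
overlined part is at most this bound. Hence `O(i,j)` is the disjoint union of
`O_1(i,j)`, `O_2(i,j)` and `O_3(i,j)`. -/
theorem AG_decomposition (i j k : ℕ) (hkj : k ≤ j) (hji : j ≤ i)
    (p : (Fin k → Fin j) × (Fin k → Bool)) (hp : p ∈ AGset j k) (hol : 1 ≤ ol p) :
    ∀ a : Fin k, p.2 a = true → (p.1 a : ℕ) ≤ j - k + ol p - 1 :=
  AG_decomposition_general j k p hp
end

section
/- For every nonnegative integer i, the diagonal case j = i of the Alladi–Gordon key identity holds: ∑_{k=0}^{i} (q^{i-k+1};q)_k [i choose k]_q q^{(i-k)^2} = 1 as polynomials in q. -/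
open Finset

/-!
Since `(q^{i-k+1};q)_k = (q;q)_i / (q;q)_{i-k}`, reversing the summation index turns the sum
into `∑_k F(i,k)` with `F(n,k) = q^{k²} (q;q)_n² / ((q;q)_k² (q;q)_{n-k})`. This is proved
equal to `1` by the Wilf–Zeilberger method: with the certificate
`G(n,k) = -q^{n+1-k} (1-q^k)² q^{k²} (q;q)_n² / ((q;q)_k² (q;q)_{n+1-k})` one has
`F(n+1,k) - F(n,k) = G(n,k+1) - G(n,k)`, which telescopes, and the boundary terms
`G(n,0) = 0`, `G(n,n+1) = -q^{(n+1)²} = -F(n+1,n+1)` cancel.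
-/

lemma q_ne_zero : q ≠ 0 := RatFunc.X_ne_zero

lemma q_pow_succ_ne_one (m : ℕ) : q ^ (m + 1) ≠ 1 := by
  intro h
  have : (Polynomial.X ^ (m + 1) : Polynomial ℚ) = 1 :=
    RatFunc.algebraMap_injective ℚ (by simpa [q, RatFunc.algebraMap_X] using h)
  simpa using congrArg Polynomial.natDegree this

lemma qPoch_q_succ (n : ℕ) : qPoch q (n + 1) = qPoch q n * (1 - q ^ (n + 1)) := by
  rw [qPoch, prod_range_succ, ← qPoch, pow_succ']

lemma qPoch_q_add (m k : ℕ) : qPoch q (m + k) = qPoch q m * qPoch (q ^ (m + 1)) k := by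
  rw [qPoch, qPoch, qPoch, prod_range_add]
  congr 1
  refine prod_congr rfl fun s _ => ?_
  ring

noncomputable def diagTerm (n k : ℕ) : RatFunc ℚ :=
  q ^ (k ^ 2) * qPoch q n ^ 2 / (qPoch q k ^ 2 * qPoch q (n - k))

noncomputable def diagCert (n k : ℕ) : RatFunc ℚ :=
  -(q ^ (n + 1) * (1 - q ^ k) ^ 2 * q ^ (k ^ 2) * qPoch q n ^ 2) /
    (q ^ k * qPoch q k ^ 2 * qPoch q (n + 1 - k))

lemma diagTerm_succ (n k : ℕ) (hk : k ≤ n) :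
    diagTerm (n + 1) k = diagTerm n k + (diagCert n (k + 1) - diagCert n k) := by
  obtain ⟨m, rfl⟩ := Nat.exists_eq_add_of_le hk
  simp only [diagTerm, diagCert, show k + m + 1 - k = m + 1 by omega, Nat.add_sub_cancel_left,
    show k + m + 1 - (k + 1) = m by omega, qPoch_q_succ]
  have := qPoch_q_ne_zero k
  have := qPoch_q_ne_zero m
  have := q_ne_zero
  have := sub_ne_zero.2 (q_pow_succ_ne_one m).symm
  have := sub_ne_zero.2 (q_pow_succ_ne_one k).symm
  field_simp
  ring

lemma diagCert_zero (n : ℕ) : diagCert n 0 = 0 := by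
  simp [diagCert]

lemma diagCert_succ_self (n : ℕ) : diagCert n (n + 1) = -q ^ ((n + 1) ^ 2) := by
  have := qPoch_q_ne_zero n
  have := sub_ne_zero.2 (q_pow_succ_ne_one n).symm
  have := q_ne_zero
  simp only [diagCert, Nat.sub_self, qPoch_zero, qPoch_q_succ n]
  field_simp

lemma diagTerm_self (n : ℕ) : diagTerm n n = q ^ (n ^ 2) := by
  have := qPoch_q_ne_zero n
  simp only [diagTerm, Nat.sub_self, qPoch_zero]
  field_simp

lemma sum_diagTerm (n : ℕ) : ∑ k ∈ range (n + 1), diagTerm n k = 1 := by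
  induction n with
  | zero => simp [diagTerm, qPoch_zero]
  | succ n ih =>
    have hstep : ∑ k ∈ range (n + 1), diagTerm (n + 1) k
        = ∑ k ∈ range (n + 1), diagTerm n k + (diagCert n (n + 1) - diagCert n 0) := by
      rw [sum_congr rfl fun k hk => diagTerm_succ n k (mem_range_succ_iff.1 hk),
        sum_add_distrib, sum_range_sub]
    rw [sum_range_succ, hstep, ih, diagCert_zero, diagCert_succ_self, diagTerm_self]
    ring

lemma summand_eq_diagTerm {i k : ℕ} (hk : k ≤ i) :
    qPoch (q ^ (i - k + 1)) k * qbinom i k * q ^ ((i - k) ^ 2) = diagTerm i (i - k) := by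
  obtain ⟨m, rfl⟩ := Nat.exists_eq_add_of_le' hk
  have hsplit := qPoch_q_add m k
  have := qPoch_q_ne_zero m
  have := qPoch_q_ne_zero k
  have : qPoch (q ^ (m + 1)) k ≠ 0 :=
    right_ne_zero_of_mul (hsplit ▸ qPoch_q_ne_zero (m + k))
  simp only [diagTerm, qbinom, Nat.add_sub_cancel, Nat.add_sub_cancel_left, hsplit]
  field_simp

/-- The diagonal case `j = i` of the Alladi–Gordon key identity:
`∑_{k=0}^{i} (q^{i-k+1};q)_k [i choose k]_q q^{(i-k)^2} = 1`. -/
theorem alladi_gordon_diagonal (i : ℕ) :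
    ∑ k ∈ Finset.range (i + 1),
      qPoch (q ^ (i - k + 1)) k * qbinom i k * q ^ ((i - k) ^ 2) = 1 := by
  calc ∑ k ∈ range (i + 1), qPoch (q ^ (i - k + 1)) k * qbinom i k * q ^ ((i - k) ^ 2)
      = ∑ k ∈ range (i + 1), diagTerm i (i - k) :=
        sum_congr rfl fun k hk => summand_eq_diagTerm (mem_range_succ_iff.1 hk)
    _ = ∑ k ∈ range (i + 1), diagTerm i k := sum_range_reflect (diagTerm i) (i + 1)
    _ = 1 := sum_diagTerm i
end

section
/- For nonnegative integers j and k with 1 ≤ k ≤ j, the number of overpartitions in O(i,j,k) with no overlined parts equals the number of partitions with exactly k nonnegative parts each at most j−k; that is, every overpartition with k nonnegative parts, each at most j−1, satisfying the overline condition and having no overlined parts, actually has all parts at most j−k. -/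
open Finset
open scoped Classical

/-- For `1 ≤ k ≤ j`: the overpartitions in `O(i,j,k)` with no overlined parts are exactly
counted by the partitions with exactly `k` nonnegative parts each at most `j-k`; indeed,
every such overpartition has all parts at most `j-k`. -/
theorem AG_no_overline_parts_le (i j k : ℕ) (hk : 1 ≤ k) (hkj : k ≤ j) :
    ((AGset j k).filter (fun p => ol p = 0)).card =
      (Finset.univ.filter (fun f : Fin k → Fin (j - k + 1) =>
        ∀ a b : Fin k, a ≤ b → (f b : ℕ) ≤ (f a : ℕ))).card ∧
    ∀ p ∈ AGset j k, ol p = 0 → ∀ a : Fin k, (p.1 a : ℕ) ≤ j - k := by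

  have key : ∀ p ∈ AGset j k, ol p = 0 → ∀ a : Fin k, (p.1 a : ℕ) ≤ j - k := by
    intro p hp h0 a
    simp only [AGset, Finset.mem_filter, Finset.mem_univ, true_and] at hp
    obtain ⟨hdec, hover, hcond⟩ := hp
    by_contra h
    push_neg at h
    have hfalse : ∀ b : Fin k, p.2 b = false := by
      intro b
      by_contra hb
      have hb' : p.2 b = true := by
        cases hbv : p.2 b with
        | false => exact absurd hbv hb
        | true => rfl
      have : b ∈ (Finset.univ.filter (fun a : Fin k => p.2 a = true)) := by
        simp [hb']
      have := Finset.card_pos.mpr ⟨b, this⟩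
      simp only [ol] at h0
      omega
    have hlt : (p.1 a : ℕ) < j := (p.1 a).isLt
    set s := j - (p.1 a : ℕ) with hs
    have hs1 : 1 ≤ s := by omega
    have hs2 : s ≤ k - 1 := by omega
    have hmem : s ∈ Finset.Icc 1 (k - 1) := Finset.mem_Icc.mpr ⟨hs1, hs2⟩
    have heq : (p.1 a : ℕ) = j - s := by omega
    have hc := hcond s hmem a heq
    have hempty : (Finset.univ.filter (fun b : Fin k => a < b ∧ p.2 b = true)) = ∅ := by
      apply Finset.filter_eq_empty_iff.mpr
      intro b _
      simp [hfalse b]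
    rw [hempty] at hc
    simp at hc
    omega
  refine ⟨?_, key⟩
  have hjk : j - k + 1 ≤ j := by omega
  refine Finset.card_bij'
    (fun p _ => fun a : Fin k => (⟨min (p.1 a : ℕ) (j - k), by omega⟩ : Fin (j - k + 1)))
    (fun f _ => ((fun a : Fin k => (⟨(f a : ℕ), by have := (f a).isLt; omega⟩ : Fin j)),
      fun _ => false)) ?hi ?hj ?li ?ri
  case hi =>
    intro p hp
    simp only [Finset.mem_filter, Finset.mem_univ, true_and] at hp ⊢
    obtain ⟨hpA, hp0⟩ := hp
    have hle := key p (by simpa [AGset, Finset.mem_filter] using hpA) hp0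
    simp only [AGset, Finset.mem_filter, Finset.mem_univ, true_and] at hpA
    intro a b hab
    have h1 := hle a
    have h2 := hle b
    have h3 := hpA.1 a b hab
    show min (p.1 b : ℕ) (j - k) ≤ min (p.1 a : ℕ) (j - k)
    omega
  case hj =>
    intro f hf
    simp only [Finset.mem_filter, Finset.mem_univ, true_and] at hf ⊢
    constructor
    · simp only [AGset, Finset.mem_filter, Finset.mem_univ, true_and]
      refine ⟨fun a b hab => hf a b hab, fun a ha => by simp at ha, ?_⟩
      intro s hs a ha
      exfalso
      have ha' : (f a : ℕ) = j - s := ha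
      have h1 := Finset.mem_Icc.mp hs
      have h2 := (f a).isLt
      omega
    · simp [ol]
  case li =>
    intro p hp
    simp only [Finset.mem_filter] at hp
    obtain ⟨hpA, hp0⟩ := hp
    have hle := key p hpA hp0
    have hfalse : ∀ b : Fin k, p.2 b = false := by
      intro b
      by_contra hb
      have hb' : p.2 b = true := by
        cases hbv : p.2 b with
        | false => exact absurd hbv hb
        | true => rfl
      have hmem : b ∈ (Finset.univ.filter (fun a : Fin k => p.2 a = true)) := by
        simp [hb']
      have := Finset.card_pos.mpr ⟨b, hmem⟩
      simp only [ol] at hp0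
      omega
    refine Prod.ext ?_ ?_
    · funext x
      have := hle x
      ext
      simp only [Fin.val_mk]
      omega
    · funext x
      simp [hfalse]
  case ri =>
    intro f hf
    funext a
    have h2 := (f a).isLt
    ext
    simp only [Fin.val_mk]
    omega
end
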